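/- arXiv:1903.06084 — 3 statements merged into one kernel-verified Lean document; each statement's English description precedes it below -/
import Mathlib

section
/- Let X be a geodesic metric space written as a finite union of closed subsets X = A₁ ∪ ... ∪ Aₙ, and let f : X → Y be a map to a metric space Y whose restriction to each Aᵢ is bornologous (with some control function). Then f is bornologous. -/
open Metric Bornology Set

/-- A metric space is geodesic if any two points are joined by an isometrically
embedded interval. -/
def GeodesicSpace (X : Type*) [MetricSpace X] : Prop :=
  ∀ x y : X, ∃ γ : ℝ → X, γ 0 = x ∧ γ (dist x y) = y ∧
    ∀ s ∈ Set.Icc (0 : ℝ) (dist x y), ∀ t ∈ Set.Icc (0 : ℝ) (dist x y),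
      dist (γ s) (γ t) = |s - t|

/-!
Join `x` to `x'` by a geodesic `γ : [0, d] → X`, `d = dist x x'`. The preimages of the `Aᵢ` are
closed and cover `[0, d]`, so one can walk from `0` to `d` in at most `n` jumps, each jump staying
inside a single preimage: from the current point, jump to the last point of a piece containing it;
that piece is never needed again. Each jump moves `f ∘ γ` by at most some `ρᵢ(d)`, hence by at
most `σ(d)` for a monotone majorant `σ` of all the `ρᵢ`.
-/

theorem exists_monotone_forall_le_of_fintype {ι : Type*} [Fintype ι] {ρ : ι → ℝ → ℝ}
    (hρ : ∀ i, Monotone (ρ i)) :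
    ∃ σ : ℝ → ℝ, Monotone σ ∧ ∀ i t, ρ i t ≤ σ t := by
  refine ⟨fun t => ∑ i, max (ρ i t) 0, fun s t hst =>
    Finset.sum_le_sum fun i _ => max_le_max (hρ i hst) le_rfl, fun i t => ?_⟩
  calc ρ i t ≤ max (ρ i t) 0 := le_max_left _ _
    _ ≤ ∑ i, max (ρ i t) 0 :=
      Finset.single_le_sum (fun j _ => le_max_right (ρ j t) 0) (Finset.mem_univ i)

theorem lipschitzOnWith_one_of_dist_eq_abs_sub {X : Type*} [PseudoMetricSpace X] {γ : ℝ → X}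
    {I : Set ℝ} (hγ : ∀ s ∈ I, ∀ t ∈ I, dist (γ s) (γ t) = |s - t|) :
    LipschitzOnWith 1 γ I :=
  LipschitzOnWith.of_dist_le_mul fun s hs t ht => by
    rw [hγ s hs t ht, Real.dist_eq, NNReal.coe_one, one_mul]

theorem dist_le_card_mul_of_Icc_subset_biUnion {ι Y : Type*} [PseudoMetricSpace Y]
    {B : ι → Set ℝ} (hB : ∀ j, IsClosed (B j)) {g : ℝ → Y} {C : ℝ}
    (hg : ∀ j, ∀ s ∈ B j, ∀ t ∈ B j, dist (g s) (g t) ≤ C) (S : Finset ι) {a b : ℝ}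
    (hab : a ≤ b) (hcover : Icc a b ⊆ ⋃ j ∈ S, B j) :
    dist (g a) (g b) ≤ S.card * C := by
  classical
  induction S using Finset.strongInduction generalizing a with
  | H S ih =>
  obtain ⟨j, hjS, haj⟩ := mem_iUnion₂.1 (hcover ⟨le_rfl, hab⟩)
  have hC : 0 ≤ C := (dist_self (g a)).symm.trans_le (hg j a haj a haj)
  -- `[t, b]` is covered without `B j`: the other pieces cover `(t, b]` and their union is closed.
  set K := B j ∩ Icc a b
  have hK_bdd : BddAbove K := bddAbove_Icc.mono inter_subset_right
  have hK_ne : K.Nonempty := ⟨a, haj, le_rfl, hab⟩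
  set t := sSup K
  have ht : t ∈ K := ((hB j).inter isClosed_Icc).csSup_mem hK_ne hK_bdd
  have h_rest : dist (g t) (g b) ≤ (S.erase j).card * C := by
    rcases ht.2.2.eq_or_lt with htb | htb
    · rw [htb, dist_self]
      positivity
    refine ih _ (Finset.erase_ssubset hjS) ht.2.2 ?_
    have h_open : Ioc t b ⊆ ⋃ i ∈ S.erase j, B i := fun s hs => by
      obtain ⟨i, hiS, hsi⟩ := mem_iUnion₂.1 (hcover ⟨ht.2.1.trans hs.1.le, hs.2⟩)
      have hij : i ≠ j := by
        rintro rfl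
        exact hs.1.not_ge (le_csSup hK_bdd ⟨hsi, ht.2.1.trans hs.1.le, hs.2⟩)
      exact mem_iUnion₂.2 ⟨i, Finset.mem_erase.2 ⟨hij, hiS⟩, hsi⟩
    have h_closed : IsClosed (⋃ i ∈ S.erase j, B i) :=
      (S.erase j).finite_toSet.isClosed_biUnion fun i _ => hB i
    rw [← closure_Ioc htb.ne]
    exact h_closed.closure_subset_iff.2 h_open
  calc dist (g a) (g b) ≤ dist (g a) (g t) + dist (g t) (g b) := dist_triangle _ _ _
    _ ≤ C + (S.erase j).card * C := add_le_add (hg j a haj t ht.1) h_rest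
    _ = S.card * C := by
      rw [Finset.card_erase_of_mem hjS, Nat.cast_sub (Finset.card_pos.2 ⟨j, hjS⟩)]
      push_cast
      ring

/-- Let `X` be a geodesic metric space written as a finite union of
closed subsets `X = A₁ ∪ ... ∪ Aₙ`, and let `f : X → Y` be a map whose restriction to
each `Aᵢ` is bornologous (with some nondecreasing control function). Then `f` is
bornologous. -/
theorem bornologous_of_finite_closed_cover {X Y : Type*} [MetricSpace X] [MetricSpace Y]
    (hX : GeodesicSpace X) (n : ℕ) (A : Fin n → Set X)
    (hclosed : ∀ i, IsClosed (A i)) (hcover : (⋃ i, A i) = Set.univ)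
    (f : X → Y)
    (hborn : ∀ i, ∃ ρ : ℝ → ℝ, Monotone ρ ∧
      ∀ x ∈ A i, ∀ x' ∈ A i, dist (f x) (f x') ≤ ρ (dist x x')) :
    ∃ ρ : ℝ → ℝ, Monotone ρ ∧ ∀ x x' : X, dist (f x) (f x') ≤ ρ (dist x x') := by
  choose ρ hρ_mono hρ using hborn
  obtain ⟨σ, hσ_mono, hρσ⟩ := exists_monotone_forall_le_of_fintype hρ_mono
  refine ⟨fun t => n * σ t,
    fun s t hst => mul_le_mul_of_nonneg_left (hσ_mono hst) n.cast_nonneg, fun x x' => ?_⟩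
  obtain ⟨γ, hγ0, hγd, hγ⟩ := hX x x'
  set d := dist x x'
  set B : Fin n → Set ℝ := fun i => Icc 0 d ∩ γ ⁻¹' A i
  have hB_closed : ∀ i, IsClosed (B i) := fun i =>
    (lipschitzOnWith_one_of_dist_eq_abs_sub hγ).continuousOn.preimage_isClosed_of_isClosed
      isClosed_Icc (hclosed i)
  have hB_cover : Icc 0 d ⊆ ⋃ i ∈ Finset.univ, B i := fun s hs => by
    obtain ⟨i, hi⟩ := mem_iUnion.1 (hcover.symm ▸ mem_univ (γ s))
    exact mem_iUnion₂.2 ⟨i, Finset.mem_univ i, hs, hi⟩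
  have hB_osc : ∀ i, ∀ s ∈ B i, ∀ t ∈ B i, dist (f (γ s)) (f (γ t)) ≤ σ d := by
    intro i s hs t ht
    have hst : |s - t| ≤ d := by
      simpa using abs_sub_le_of_le_of_le hs.1.1 hs.1.2 ht.1.1 ht.1.2
    calc dist (f (γ s)) (f (γ t)) ≤ ρ i |s - t| := hγ s hs.1 t ht.1 ▸ hρ i _ hs.2 _ ht.2
      _ ≤ σ d := (hρ_mono i hst).trans (hρσ i d)
  have h := dist_le_card_mul_of_Icc_subset_biUnion hB_closed hB_osc Finset.univ dist_nonneg hB_cover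
  rwa [hγ0, hγd, Finset.card_univ, Fintype.card_fin] at h
end

section
/- Let α, β : c([0,1]) → X be bornologous maps into a metric space X with sup_x d(α(x,x), β(x,0)) < ∞. Define the concatenation α∗β : c([0,1]) → X by (α∗β)(x,t) = α(x, 2t) if t ≤ x/2 and (α∗β)(x,t) = β(x, 2t - x) if x/2 < t ≤ x. Then α∗β is bornologous; moreover if α and β are coarse, so is α∗β. -/
open Metric Bornology Set

noncomputable section

/-- The metric cone over `[0,1]`: `c([0,1]) = {(x,t) : 0 ≤ t ≤ x} ⊆ ℝ²` with the
Euclidean metric. -/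
def c01 : Set (EuclideanSpace ℝ (Fin 2)) := {v | 0 ≤ v 1 ∧ v 1 ≤ v 0}

/-- Bornologous on a subset: a control function for distances of pairs in `A`. -/
def BornologousOn {X Y : Type*} [PseudoMetricSpace X] [PseudoMetricSpace Y]
    (A : Set X) (f : X → Y) : Prop :=
  ∃ ρ : ℝ → ℝ, ∀ x ∈ A, ∀ x' ∈ A, dist (f x) (f x') ≤ ρ (dist x x')

/-- Coarse on a subset: bornologous on `A` and preimages (within `A`) of bounded sets
are bounded. -/
def CoarseOn {X Y : Type*} [PseudoMetricSpace X] [PseudoMetricSpace Y]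
    (A : Set X) (f : X → Y) : Prop :=
  BornologousOn A f ∧
    ∀ B : Set Y, Bornology.IsBounded B → Bornology.IsBounded (A ∩ f ⁻¹' B)

/-- The concatenation `α∗β` of two maps on `c([0,1])`:
`(α∗β)(x,t) = α(x,2t)` for `t ≤ x/2` and `(α∗β)(x,t) = β(x,2t-x)` for `t > x/2`. -/
def concatMap {X : Type*} (α β : EuclideanSpace ℝ (Fin 2) → X) :
    EuclideanSpace ℝ (Fin 2) → X := fun v =>
  if v 1 ≤ v 0 / 2 then α !₂[v 0, 2 * v 1] else β !₂[v 0, 2 * v 1 - v 0]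

/-!
Off the midline `t = x / 2` the map `α∗β` is `α` or `β` precomposed with one of the bi-Lipschitz
maps `(x, t) ↦ (x, 2t)`, `(x, t) ↦ (x, 2t - x)`, and two points on different sides are joined
through the point `(x, x / 2)` of the midline, where the two formulas differ by at most
`sup_x d(α(x,x), β(x,0))`. Bi-Lipschitz maps preserve both control and properness.

The only subtlety is that `BornologousOn` controls distances only through their exact value. On
the cone, two points at distance at most `s` are joined by a chain of four steps of lengths exactly
`√10 s, s, s, √10 s`: shift both points by `s • (3, 1)` into the interior and close an isosceles
triangle over the shifted pair. This gives a bound valid for all distances up to `s`.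
-/

open Module
open scoped InnerProductSpace

local notation "ℝ²" => EuclideanSpace ℝ (Fin 2)

theorem exists_norm_eq_one_inner_eq_zero {E : Type*} [NormedAddCommGroup E]
    [InnerProductSpace ℝ E] [FiniteDimensional ℝ E] (hE : 2 ≤ finrank ℝ E) (v : E) :
    ∃ w : E, ‖w‖ = 1 ∧ ⟪v, w⟫_ℝ = 0 := by
  have hspan : finrank ℝ (ℝ ∙ v) ≤ 1 := by
    simpa using finrank_span_le_card ({v} : Set E)
  have hperp : (ℝ ∙ v)ᗮ ≠ ⊥ := by
    intro h
    have := (ℝ ∙ v).finrank_add_finrank_orthogonal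
    rw [h, finrank_bot] at this
    omega
  obtain ⟨w, hw, hw0⟩ := Submodule.exists_mem_ne_zero_of_ne_bot hperp
  refine ⟨‖w‖⁻¹ • w, norm_smul_inv_norm hw0, ?_⟩
  rw [inner_smul_right, Submodule.mem_orthogonal_singleton_iff_inner_right.mp hw, mul_zero]

theorem exists_dist_eq_dist_eq_of_dist_le {E : Type*} [NormedAddCommGroup E]
    [InnerProductSpace ℝ E] [FiniteDimensional ℝ E] (hE : 2 ≤ finrank ℝ E) {p q : E} {s : ℝ}
    (hpq : dist p q ≤ 2 * s) :
    ∃ r, dist p r = s ∧ dist q r = s ∧ dist r (midpoint ℝ p q) ≤ s := by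
  obtain ⟨w, hw1, hw⟩ := exists_norm_eq_one_inner_eq_zero hE (q - p)
  have hs : 0 ≤ s := by linarith [dist_nonneg (x := p) (y := q)]
  set h := √(s ^ 2 - dist p q ^ 2 / 4)
  have hh : h ^ 2 = s ^ 2 - dist p q ^ 2 / 4 :=
    Real.sq_sqrt (by nlinarith [dist_nonneg (x := p) (y := q)])
  have hnorm : ∀ c : ℝ, c ^ 2 = 1 / 4 → ‖c • (q - p) + h • w‖ = s := by
    intro c hc
    rw [← sq_eq_sq₀ (norm_nonneg _) hs, norm_add_sq_real, inner_smul_left, inner_smul_right, hw,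
      norm_smul, norm_smul, hw1, ← dist_eq_norm', mul_pow, mul_pow, Real.norm_eq_abs,
      Real.norm_eq_abs, sq_abs, sq_abs, hh, hc]
    ring
  refine ⟨midpoint ℝ p q + h • w, ?_, ?_, ?_⟩
  · rw [dist_comm, dist_eq_norm, add_sub_right_comm, midpoint_sub_left]
    exact hnorm _ (by norm_num)
  · rw [dist_comm, dist_eq_norm, add_sub_right_comm, midpoint_sub_right, ← neg_sub q p, smul_neg,
      ← neg_smul]
    exact hnorm _ (by norm_num)
  · rw [dist_eq_norm, add_sub_cancel_left, norm_smul, hw1, mul_one,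
      Real.norm_of_nonneg (Real.sqrt_nonneg _)]
    exact Real.sqrt_le_iff.mpr ⟨hs, by nlinarith [sq_nonneg (dist p q)]⟩

def IsUpperControlOn {X Y : Type*} [PseudoMetricSpace X] [PseudoMetricSpace Y]
    (A : Set X) (f : X → Y) (σ : ℝ → ℝ) : Prop :=
  ∀ p ∈ A, ∀ q ∈ A, ∀ s, dist p q ≤ s → dist (f p) (f q) ≤ σ s

theorem BornologousOn.exists_isUpperControlOn {E X : Type*} [NormedAddCommGroup E]
    [InnerProductSpace ℝ E] [FiniteDimensional ℝ E] [PseudoMetricSpace X]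
    (hE : 2 ≤ finrank ℝ E) {A : Set E} (hA : Convex ℝ A) {u : E}
    (hu : ∀ v ∈ A, ∀ t, closedBall (v + t • u) t ⊆ A) {f : E → X}
    (hf : BornologousOn A f) : ∃ σ, IsUpperControlOn A f σ := by
  obtain ⟨ρ, hρ⟩ := hf
  refine ⟨fun s => 2 * ρ (s * ‖u‖) + 2 * ρ s, fun p hp q hq s hpq => ?_⟩
  have hs : 0 ≤ s := dist_nonneg.trans hpq
  have hshift : ∀ v ∈ A, v + s • u ∈ A := fun v hv => hu v hv s (mem_closedBall_self hs)
  have hdist : ∀ v : E, dist v (v + s • u) = s * ‖u‖ := fun v => by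
    rw [dist_self_add_right, norm_smul, Real.norm_of_nonneg hs]
  obtain ⟨r, hpr, hqr, hrm⟩ := exists_dist_eq_dist_eq_of_dist_le hE
    (p := p + s • u) (q := q + s • u) (s := s) (by rw [dist_add_right]; linarith)
  have hr : r ∈ A := by
    refine hu _ (hA.midpoint_mem hp hq) s ?_
    rwa [mem_closedBall, show midpoint ℝ p q + s • u = midpoint ℝ (p + s • u) (q + s • u) by
      rw [midpoint_eq_smul_add, midpoint_eq_smul_add, invOf_eq_inv]; module]
  have h₁ := hρ p hp _ (hshift p hp)
  have h₂ := hρ _ (hshift p hp) r hr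
  have h₃ := hρ r hr _ (hshift q hq)
  have h₄ := hρ _ (hshift q hq) q hq
  rw [hdist] at h₁
  rw [hpr] at h₂
  rw [dist_comm r, hqr] at h₃
  rw [dist_comm _ q, hdist] at h₄
  linarith [dist_triangle4 (f p) (f (p + s • u)) (f r) (f q),
    dist_triangle (f r) (f (q + s • u)) (f q), dist_comm (f r) (f (q + s • u))]



theorem abs_sub_apply_le_dist (v w : ℝ²) (i : Fin 2) : |v i - w i| ≤ dist v w := by
  simpa only [Real.dist_eq] using PiLp.dist_apply_le v w i

theorem dist_le_abs_add_abs (v w : ℝ²) : dist v w ≤ |v 0 - w 0| + |v 1 - w 1| := by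
  rw [EuclideanSpace.dist_eq, Fin.sum_univ_two, Real.dist_eq, Real.dist_eq]
  refine Real.sqrt_le_iff.mpr ⟨by positivity, ?_⟩
  nlinarith [sq_abs (v 0 - w 0), sq_abs (v 1 - w 1), abs_nonneg (v 0 - w 0),
    abs_nonneg (v 1 - w 1)]

theorem convex_c01 : Convex ℝ c01 := by
  intro v hv w hw a b ha hb _
  refine ⟨?_, ?_⟩ <;> simp only [PiLp.add_apply, PiLp.smul_apply, smul_eq_mul] <;>
    nlinarith [hv.1, hv.2, hw.1, hw.2]

theorem closedBall_add_smul_subset_c01 {v : ℝ²} (hv : v ∈ c01) (t : ℝ) :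
    closedBall (v + t • !₂[3, 1]) t ⊆ c01 := by
  intro w hw
  rw [mem_closedBall] at hw
  have h₀ := (abs_le.mp ((abs_sub_apply_le_dist w _ 0).trans hw)).1
  have h₁ := abs_le.mp ((abs_sub_apply_le_dist w _ 1).trans hw)
  simp only [PiLp.add_apply, PiLp.smul_apply, smul_eq_mul, Matrix.cons_val_zero,
    Matrix.cons_val_one] at h₀ h₁
  exact ⟨by linarith [hv.1], by linarith [hv.2]⟩

theorem BornologousOn.exists_isUpperControlOn_c01 {X : Type*} [PseudoMetricSpace X] {f : ℝ² → X}
    (hf : BornologousOn c01 f) : ∃ σ, IsUpperControlOn c01 f σ :=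
  hf.exists_isUpperControlOn (by rw [finrank_euclideanSpace_fin]) convex_c01
    fun _ hv t => closedBall_add_smul_subset_c01 hv t

def stretchLower (v : ℝ²) : ℝ² := !₂[v 0, 2 * v 1]

def stretchUpper (v : ℝ²) : ℝ² := !₂[v 0, 2 * v 1 - v 0]

@[simp] theorem stretchLower_apply_zero (v : ℝ²) : stretchLower v 0 = v 0 := rfl
@[simp] theorem stretchLower_apply_one (v : ℝ²) : stretchLower v 1 = 2 * v 1 := rfl
@[simp] theorem stretchUpper_apply_zero (v : ℝ²) : stretchUpper v 0 = v 0 := rfl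
@[simp] theorem stretchUpper_apply_one (v : ℝ²) : stretchUpper v 1 = 2 * v 1 - v 0 := rfl

theorem concatMap_apply {X : Type*} (α β : ℝ² → X) (v : ℝ²) :
    concatMap α β v = if v 1 ≤ v 0 / 2 then α (stretchLower v) else β (stretchUpper v) := rfl

theorem stretchLower_mem_c01 {v : ℝ²} (hv : v ∈ c01) (h : v 1 ≤ v 0 / 2) :
    stretchLower v ∈ c01 := by
  constructor <;> simp only [stretchLower_apply_zero, stretchLower_apply_one] <;> linarith [hv.1]

theorem stretchUpper_mem_c01 {v : ℝ²} (hv : v ∈ c01) (h : v 0 / 2 ≤ v 1) :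
    stretchUpper v ∈ c01 := by
  constructor <;> simp only [stretchUpper_apply_zero, stretchUpper_apply_one] <;> linarith [hv.2]

theorem lipschitzWith_stretchLower : LipschitzWith 3 stretchLower := by
  refine LipschitzWith.of_dist_le_mul fun v w => ?_
  have h₀ := abs_sub_apply_le_dist v w 0
  have h₁ := abs_sub_apply_le_dist v w 1
  refine (dist_le_abs_add_abs _ _).trans ?_
  simp only [stretchLower_apply_zero, stretchLower_apply_one, ← mul_sub, abs_mul, abs_two]
  push_cast; linarith

theorem lipschitzWith_stretchUpper : LipschitzWith 4 stretchUpper := by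
  refine LipschitzWith.of_dist_le_mul fun v w => ?_
  have h₀ := abs_sub_apply_le_dist v w 0
  have h₁ := abs_sub_apply_le_dist v w 1
  refine (dist_le_abs_add_abs _ _).trans ?_
  simp only [stretchUpper_apply_zero, stretchUpper_apply_one]
  rw [show 2 * v 1 - v 0 - (2 * w 1 - w 0) = 2 * (v 1 - w 1) - (v 0 - w 0) by ring]
  have := abs_sub (2 * (v 1 - w 1)) (v 0 - w 0)
  rw [abs_mul, abs_two] at this
  push_cast; linarith

theorem antilipschitzWith_stretchLower : AntilipschitzWith 2 stretchLower := by
  refine AntilipschitzWith.of_le_mul_dist fun v w => ?_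
  have h₀ := abs_sub_apply_le_dist (stretchLower v) (stretchLower w) 0
  have h₁ := abs_sub_apply_le_dist (stretchLower v) (stretchLower w) 1
  simp only [stretchLower_apply_zero, stretchLower_apply_one, ← mul_sub, abs_mul, abs_two] at h₀ h₁
  push_cast
  linarith [dist_le_abs_add_abs v w, dist_nonneg (x := stretchLower v) (y := stretchLower w)]

theorem antilipschitzWith_stretchUpper : AntilipschitzWith 2 stretchUpper := by
  refine AntilipschitzWith.of_le_mul_dist fun v w => ?_
  have h₀ := abs_sub_apply_le_dist (stretchUpper v) (stretchUpper w) 0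
  have h₁ := abs_sub_apply_le_dist (stretchUpper v) (stretchUpper w) 1
  simp only [stretchUpper_apply_zero, stretchUpper_apply_one] at h₀ h₁
  have := abs_add_le (2 * v 1 - v 0 - (2 * w 1 - w 0)) (v 0 - w 0)
  rw [show 2 * v 1 - v 0 - (2 * w 1 - w 0) + (v 0 - w 0) = 2 * (v 1 - w 1) by ring, abs_mul,
    abs_two] at this
  push_cast; linarith [dist_le_abs_add_abs v w]

section concat

variable {X : Type*} [PseudoMetricSpace X] {α β : ℝ² → X} {σα σβ : ℝ → ℝ} {D : ℝ}

theorem dist_stretchLower_stretchUpper_le (hα : IsUpperControlOn c01 α σα)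
    (hβ : IsUpperControlOn c01 β σβ) (hD : ∀ x : ℝ, 0 ≤ x → dist (α !₂[x, x]) (β !₂[x, 0]) ≤ D)
    {v w : ℝ²} (hv : v ∈ c01) (hw : w ∈ c01) (hvl : v 1 ≤ v 0 / 2) (hwu : w 0 / 2 ≤ w 1) :
    dist (α (stretchLower v)) (β (stretchUpper w)) ≤
      σα (8 * dist v w) + D + σβ (8 * dist v w) := by
  set m : ℝ² := !₂[w 0, w 0 / 2]
  have hm₀ : m 0 = w 0 := rfl
  have hm₁ : m 1 = w 0 / 2 := rfl
  have hw₀ : 0 ≤ w 0 := hw.1.trans hw.2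
  have hm : m ∈ c01 := ⟨by rw [hm₁]; linarith, by rw [hm₀, hm₁]; linarith⟩
  have hΔ₀ := abs_le.mp (abs_sub_apply_le_dist v w 0)
  have hΔ₁ := abs_le.mp (abs_sub_apply_le_dist v w 1)
  have hmw : dist m w ≤ 3 / 2 * dist v w := by
    refine (dist_le_abs_add_abs m w).trans ?_
    rw [hm₀, hm₁, sub_self, abs_zero, abs_of_nonpos (by linarith)]
    linarith
  have hvm : dist v m ≤ 5 / 2 * dist v w := by linarith [dist_triangle v w m, dist_comm m w]
  have hlower : dist (α (stretchLower v)) (α (stretchLower m)) ≤ σα (8 * dist v w) := by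
    refine hα _ (stretchLower_mem_c01 hv hvl) _ (stretchLower_mem_c01 hm hm₁.le) _ ?_
    have := lipschitzWith_stretchLower.dist_le_mul v m
    push_cast at this
    linarith [dist_nonneg (x := v) (y := w)]
  have hupper : dist (β (stretchUpper m)) (β (stretchUpper w)) ≤ σβ (8 * dist v w) := by
    refine hβ _ (stretchUpper_mem_c01 hm hm₁.ge) _ (stretchUpper_mem_c01 hw hwu) _ ?_
    have := lipschitzWith_stretchUpper.dist_le_mul m w
    push_cast at this
    linarith [dist_nonneg (x := v) (y := w)]
  have hmid : dist (α (stretchLower m)) (β (stretchUpper m)) ≤ D := by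
    convert hD (w 0) hw₀ using 4 <;> ext i <;> fin_cases i <;> simp [m] <;> ring
  linarith [dist_triangle4 (α (stretchLower v)) (α (stretchLower m)) (β (stretchUpper m))
    (β (stretchUpper w))]

theorem bornologousOn_concatMap (hα : IsUpperControlOn c01 α σα)
    (hβ : IsUpperControlOn c01 β σβ) (hD : ∀ x : ℝ, 0 ≤ x → dist (α !₂[x, x]) (β !₂[x, 0]) ≤ D) :
    BornologousOn c01 (concatMap α β) := by
  refine ⟨fun s => max (max (σα (8 * s)) (σβ (8 * s))) (σα (8 * s) + D + σβ (8 * s)),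
    fun v hv w hw => ?_⟩
  have hd := dist_nonneg (x := v) (y := w)
  simp only [concatMap_apply]
  split_ifs with hvl hwl hwl
  · refine le_max_of_le_left (le_max_of_le_left ?_)
    refine hα _ (stretchLower_mem_c01 hv hvl) _ (stretchLower_mem_c01 hw hwl) _ ?_
    have := lipschitzWith_stretchLower.dist_le_mul v w
    push_cast at this
    linarith
  · exact le_max_of_le_right
      (dist_stretchLower_stretchUpper_le hα hβ hD hv hw hvl (not_le.mp hwl).le)
  · rw [dist_comm, dist_comm v]
    exact le_max_of_le_right
      (dist_stretchLower_stretchUpper_le hα hβ hD hw hv hwl (not_le.mp hvl).le)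
  · refine le_max_of_le_left (le_max_of_le_right ?_)
    refine hβ _ (stretchUpper_mem_c01 hv (not_le.mp hvl).le) _
      (stretchUpper_mem_c01 hw (not_le.mp hwl).le) _ ?_
    have := lipschitzWith_stretchUpper.dist_le_mul v w
    push_cast at this
    linarith

end concat

theorem isBounded_inter_preimage_concatMap {X : Type*} [PseudoMetricSpace X] {α β : ℝ² → X}
    {B : Set X} (hα : IsBounded (c01 ∩ α ⁻¹' B)) (hβ : IsBounded (c01 ∩ β ⁻¹' B)) :
    IsBounded (c01 ∩ concatMap α β ⁻¹' B) := by
  refine ((antilipschitzWith_stretchLower.isBounded_preimage hα).union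
    (antilipschitzWith_stretchUpper.isBounded_preimage hβ)).subset ?_
  rintro v ⟨hv, hvB⟩
  rw [mem_preimage, concatMap_apply] at hvB
  split_ifs at hvB with hvl
  · exact Or.inl ⟨stretchLower_mem_c01 hv hvl, hvB⟩
  · exact Or.inr ⟨stretchUpper_mem_c01 hv (not_le.mp hvl).le, hvB⟩

/-- If `α, β : c([0,1]) → X` are bornologous with
`sup_x d(α(x,x), β(x,0)) < ∞`, then the concatenation `α∗β` is bornologous; moreover
if `α` and `β` are coarse then so is `α∗β`. -/
theorem concat_bornologous_and_coarse {X : Type*} [MetricSpace X]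
    (α β : EuclideanSpace ℝ (Fin 2) → X)
    (hα : BornologousOn c01 α) (hβ : BornologousOn c01 β)
    (hclose : ∃ D : ℝ, ∀ x : ℝ, 0 ≤ x → dist (α !₂[x, x]) (β !₂[x, 0]) ≤ D) :
    BornologousOn c01 (concatMap α β) ∧
      (CoarseOn c01 α → CoarseOn c01 β → CoarseOn c01 (concatMap α β)) := by
  obtain ⟨D, hD⟩ := hclose
  obtain ⟨σα, hσα⟩ := hα.exists_isUpperControlOn_c01
  obtain ⟨σβ, hσβ⟩ := hβ.exists_isUpperControlOn_c01
  have hconcat := bornologousOn_concatMap hσα hσβ hD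
  exact ⟨hconcat, fun hα' hβ' =>
    ⟨hconcat, fun B hB => isBounded_inter_preimage_concatMap (hα'.2 B hB) (hβ'.2 B hB)⟩⟩

end
end

section
/- Let G act uniformly coarsely discontinuously by isometries on a metric space X with quotient map q : X → X/G, let b : [0,∞) → X/G be a coarse map with control function ρ, and let b', b'' : [0,∞) → X be two lifts of b (i.e., q∘b' = q∘b'' = b) that are bornologous with control function ρ. Then there exists g ∈ G and an unbounded-complement-avoiding agreement: b''(t) = g·b'(t) for all t outside a bounded set. In particular, every lift of b is equivalent (agreeing outside a bounded set) to g∘b' for a unique g ∈ G. -/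
/-
Write `b''(t) = γ(t) • b'(t)`. For a fixed shift `u`, the two points `γ(t) • b'(t)` and
`γ(t + u) • b'(t)` are within `2ρ(|u|)` of each other, since both lifts are `ρ`-bornologous
and `G` acts by isometries. Properness of `b'` pushes `b'(t)` out of the orbit of any bounded
set, so by uniform coarse discontinuity the orbit of `b'(t)` is eventually `R`-separated for
every `R`; hence `γ(t + u) = γ(t)` for all large `t`. A function on `ℝ` that eventually
commutes with every translation is eventually constant, which gives `g`; uniqueness is the
same separation argument with `R = 0`.
-/

open Metric Bornology Set

/-- The quotient distance on the orbit space `X/G`, expressed on representatives: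
`d([x],[y]) = inf { d(x, y') : y' ∈ [y] }`. -/
noncomputable def orbitDist (G : Type*) {X : Type*} [Group G] [MulAction G X]
    [PseudoMetricSpace X] (x y : X) : ℝ :=
  sInf (Set.range fun g : G => dist x (g • y))

/-- A group action is uniformly coarsely discontinuous if for every `R > 0` there is a
bounded set `K ⊆ X` such that every point outside `⋃_{g} g(K)` is moved more than `R`
by every nontrivial group element. -/
def UnifCoarselyDiscontinuous (G : Type*) (X : Type*) [Group G] [MulAction G X]
    [PseudoMetricSpace X] : Prop :=
  ∀ R : ℝ, 0 < R → ∃ K : Set X, Bornology.IsBounded K ∧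
    ∀ x : X, x ∉ (⋃ g : G, (fun y : X => g • y) '' K) → ∀ g : G, g ≠ 1 → R < dist x (g • x)

open Filter

lemma Real.isBounded_setOf_nonneg_and_iff {p : ℝ → Prop} :
    IsBounded {t : ℝ | 0 ≤ t ∧ p t} ↔ ∀ᶠ t in atTop, ¬ p t := by
  rw [isBounded_iff_bddBelow_bddAbove, and_iff_right ⟨0, fun t ht => ht.1⟩, eventually_atTop]
  constructor
  · rintro ⟨M, hM⟩
    exact ⟨max M 0 + 1, fun t ht hpt => by
      linarith [hM ⟨(le_max_right M 0).trans (by linarith), hpt⟩, le_max_left M 0]⟩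
  · rintro ⟨M, hM⟩
    exact ⟨M, fun t ht => le_of_not_ge fun hMt => hM t hMt ht.2⟩

lemma exists_eventually_eq_of_forall_eventually_add_eq {α : Type*} {f : ℝ → α}
    (hf : ∀ u, ∀ᶠ t in atTop, f (t + u) = f t) : ∃ c, ∀ᶠ t in atTop, f t = c := by
  obtain ⟨M, hM⟩ := eventually_atTop.1 (hf 1)
  have hperiodic : ∀ n : ℕ, ∀ t ≥ M, f (t + n) = f t := by
    intro n
    induction n with
    | zero => simp
    | succ n ih =>
      intro t ht
      rw [Nat.cast_succ, ← add_assoc, hM _ (by linarith [n.cast_nonneg (α := ℝ)]), ih t ht]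
  -- Shift `t` and `M` by one large integer `n`, where translation by `t - M` is trivial.
  refine ⟨f M, eventually_atTop.2 ⟨M, fun t ht => ?_⟩⟩
  obtain ⟨N, hN⟩ := eventually_atTop.1 (hf (t - M))
  obtain ⟨n, hn⟩ := exists_nat_ge (N - M)
  calc f t = f (t + n) := (hperiodic n t ht).symm
    _ = f (M + n + (t - M)) := by ring_nf
    _ = f (M + n) := hN _ (by linarith)
    _ = f M := hperiodic n M le_rfl

section OrbitSeparation

variable {G X : Type*} [Group G] [MulAction G X] [PseudoMetricSpace X]

lemma orbitDist_le_dist (x y : X) : orbitDist G x y ≤ dist x y :=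
  csInf_le ⟨0, by rintro _ ⟨g, rfl⟩; exact dist_nonneg⟩ ⟨1, by simp⟩

lemma eventually_eq_of_dist_smul_smul_le (hiso : ∀ g : G, Isometry fun x : X => g • x)
    (hdisc : UnifCoarselyDiscontinuous G X) {b : ℝ → X}
    (hproper : ∀ S : Set X, (∃ D : ℝ, ∀ x ∈ S, ∀ y ∈ S, orbitDist G x y ≤ D) →
      IsBounded {t : ℝ | 0 ≤ t ∧ ∃ g : G, g • b t ∈ S}) (R : ℝ) :
    ∀ᶠ t in atTop, ∀ g h : G, dist (g • b t) (h • b t) ≤ R → g = h := by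
  obtain ⟨K, hKb, hK⟩ := hdisc (max R 1) (by positivity)
  obtain ⟨C, hC⟩ := isBounded_iff.1 hKb
  have hout := Real.isBounded_setOf_nonneg_and_iff.1 <|
    hproper K ⟨C, fun x hx y hy => (orbitDist_le_dist x y).trans (hC hx hy)⟩
  filter_upwards [hout] with t ht g h hgh
  have hnot_mem : b t ∉ ⋃ k : G, (fun y : X => k • y) '' K := by
    simp only [mem_iUnion, mem_image, not_exists, not_and]
    rintro k y hy hky
    exact ht ⟨k⁻¹, by rwa [← hky, inv_smul_smul]⟩
  by_contra hne
  have hmove := hK (b t) hnot_mem (g⁻¹ * h) (by rwa [Ne, inv_mul_eq_one])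
  rw [← (hiso g).dist_eq, smul_smul, mul_inv_cancel_left] at hmove
  linarith [le_max_left R 1]

lemma eventually_add_eq_of_lift (hiso : ∀ g : G, Isometry fun x : X => g • x) {ρ : ℝ → ℝ}
    {b' b'' : ℝ → X} {γ : ℝ → G}
    (hb' : ∀ s t : ℝ, 0 ≤ s → 0 ≤ t → dist (b' s) (b' t) ≤ ρ |s - t|)
    (hb'' : ∀ s t : ℝ, 0 ≤ s → 0 ≤ t → dist (b'' s) (b'' t) ≤ ρ |s - t|)
    (hγ : ∀ t : ℝ, 0 ≤ t → b'' t = γ t • b' t)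
    (hsep : ∀ R, ∀ᶠ t in atTop, ∀ g h : G, dist (g • b' t) (h • b' t) ≤ R → g = h)
    (u : ℝ) :
    ∀ᶠ t in atTop, γ (t + u) = γ t := by
  filter_upwards [hsep (ρ |u| + ρ |u|), eventually_ge_atTop 0, eventually_ge_atTop (-u)]
    with t hsep_t ht htu
  have htu : 0 ≤ t + u := by linarith
  refine (hsep_t _ _ ?_).symm
  calc dist (γ t • b' t) (γ (t + u) • b' t)
      ≤ dist (γ t • b' t) (γ (t + u) • b' (t + u))
        + dist (γ (t + u) • b' (t + u)) (γ (t + u) • b' t) := dist_triangle _ _ _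
    _ = dist (b'' t) (b'' (t + u)) + dist (b' (t + u)) (b' t) := by
      rw [hγ t ht, hγ _ htu, (hiso _).dist_eq]
    _ ≤ ρ |u| + ρ |u| := by
      gcongr
      · simpa using hb'' t (t + u) ht htu
      · simpa using hb' (t + u) t htu ht

end OrbitSeparation

/-- Let `G` act uniformly coarsely discontinuously by isometries on
`X`, let `b : [0,∞) → X/G` be a coarse map with control function `ρ`, and let
`b', b'' : [0,∞) → X` be two lifts of `b`, bornologous with control function `ρ`.
Then there is a unique `g ∈ G` such that `b''(t) = g·b'(t)` for all `t` outside a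
bounded set; i.e. every lift of `b` is equivalent to `g∘b'` for a unique `g ∈ G`. -/
theorem lift_equivalent_to_translate {G X : Type*} [Group G] [MulAction G X]
    [MetricSpace X] (hiso : ∀ g : G, Isometry fun x : X => g • x)
    (hdisc : UnifCoarselyDiscontinuous G X)
    (ρ : ℝ → ℝ) (b' b'' : ℝ → X)
    (hb' : ∀ s t : ℝ, 0 ≤ s → 0 ≤ t → dist (b' s) (b' t) ≤ ρ |s - t|)
    (hb'' : ∀ s t : ℝ, 0 ≤ s → 0 ≤ t → dist (b'' s) (b'' t) ≤ ρ |s - t|)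
    (hlift : ∀ t : ℝ, 0 ≤ t → ∃ g : G, b'' t = g • b' t)
    (hproper : ∀ S : Set X, (∃ D : ℝ, ∀ x ∈ S, ∀ y ∈ S, orbitDist G x y ≤ D) →
      Bornology.IsBounded {t : ℝ | 0 ≤ t ∧ ∃ g : G, g • b' t ∈ S}) :
    ∃! g : G, Bornology.IsBounded {t : ℝ | 0 ≤ t ∧ b'' t ≠ g • b' t} := by
  choose! γ hγ using hlift
  have hsep := eventually_eq_of_dist_smul_smul_le hiso hdisc hproper
  obtain ⟨g, hg⟩ := exists_eventually_eq_of_forall_eventually_add_eq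
    (eventually_add_eq_of_lift hiso hb' hb'' hγ hsep)
  refine ⟨g, ?_, fun g' hg' => ?_⟩
  · refine Real.isBounded_setOf_nonneg_and_iff.2 ?_
    filter_upwards [hg, eventually_ge_atTop 0] with t hgt ht
    rw [not_not, hγ t ht, hgt]
  · obtain ⟨t, hg't, hgt, ht, hsep_t⟩ :=
      ((Real.isBounded_setOf_nonneg_and_iff.1 hg').and
        (hg.and ((eventually_ge_atTop 0).and (hsep 0)))).exists
    refine hsep_t g' g (le_of_eq ?_)
    rw [← not_not.1 hg't, hγ t ht, hgt, dist_self]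
end
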